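/- Assume the highest root θ is fundamental, let α_θ be the unique simple root with (θ, α_θ) ≠ 0, let S_1 be the set of simple roots adjacent to α_θ, and let S_2 = S_1 ∪ {α_θ}. Then S_1 ≠ S_2, d(S_1) = 3, d(S_2) = 5, and I_{S_1} = I_{S_2}, i.e., {γ ∈ Δ⁺ : deg_{S_1}(γ) ≥ 2} = {γ ∈ Δ⁺ : deg_{S_2}(γ) ≥ 3}. In particular, when θ is fundamental the map S ↦ I_S (equivalently, the map f_2 from standard parabolic subalgebras to abelian ideals) is not injective. -/

import Mathlib

open scoped InnerProductSpace

/-- An irreducible reduced crystallographic root system, spanning a finite-dimensional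
real inner product space, together with a fixed base (set of simple roots) and the
coefficient function expressing each root in the base. -/
structure RootSystemData (V : Type) [NormedAddCommGroup V] [InnerProductSpace ℝ V]
    [FiniteDimensional ℝ V] where
  roots : Set V
  finite : roots.Finite
  nonzero : ∀ γ ∈ roots, γ ≠ 0
  spans : Submodule.span ℝ roots = ⊤
  reflClosed : ∀ α ∈ roots, ∀ β ∈ roots, β - (2 * ⟪β, α⟫_ℝ / ⟪α, α⟫_ℝ) • α ∈ roots
  crystal : ∀ α ∈ roots, ∀ β ∈ roots, ∃ k : ℤ, 2 * ⟪β, α⟫_ℝ / ⟪α, α⟫_ℝ = (k : ℝ)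
  reduced : ∀ α ∈ roots, ∀ t : ℝ, t • α ∈ roots → t = 1 ∨ t = -1
  irred : ∀ A B : Set V, roots = A ∪ B → (∀ a ∈ A, ∀ b ∈ B, ⟪a, b⟫_ℝ = 0) →
    A = ∅ ∨ B = ∅
  simples : Finset V
  simples_sub : ↑simples ⊆ roots
  simples_indep : LinearIndependent ℝ (Subtype.val : {x : V // x ∈ simples} → V)
  coeff : V → V → ℤ
  coeff_spec : ∀ γ ∈ roots, γ = ∑ α ∈ simples, coeff γ α • α
  coeff_sign : ∀ γ ∈ roots, (∀ α ∈ simples, 0 ≤ coeff γ α) ∨ (∀ α ∈ simples, coeff γ α ≤ 0)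

namespace RootSystemData

variable {V : Type} [NormedAddCommGroup V] [InnerProductSpace ℝ V] [FiniteDimensional ℝ V]
variable (R : RootSystemData V)

/-- The set of positive roots `Δ⁺` (w.r.t. the base `simples`). -/
def posRoots : Set V := {γ | γ ∈ R.roots ∧ ∀ α ∈ R.simples, 0 ≤ R.coeff γ α}

/-- The partial order `μ ≼ ν`: `ν - μ` is a nonnegative integral combination of simple roots. -/
def rle (μ ν : V) : Prop := ∃ c : V → ℕ, ν - μ = ∑ α ∈ R.simples, (c α : ℤ) • α

/-- `θ` is the highest root. -/
def IsHighest (θ : V) : Prop := θ ∈ R.posRoots ∧ ∀ γ ∈ R.roots, R.rle γ θ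

/-- `γ` is a long root: a root of maximal length. -/
def IsLong (γ : V) : Prop := γ ∈ R.roots ∧ ∀ γ' ∈ R.roots, ‖γ'‖ ≤ ‖γ‖

/-- `I` is an upper ideal of `(Δ⁺, ≼)`. -/
def IsUpperIdeal (I : Set V) : Prop :=
  I ⊆ R.posRoots ∧ ∀ ν ∈ I, ∀ γ ∈ R.posRoots, R.rle ν γ → γ ∈ I

/-- `I` is an abelian upper ideal of `(Δ⁺, ≼)`. -/
def IsAbelianIdeal (I : Set V) : Prop :=
  R.IsUpperIdeal I ∧ ∀ γ₁ ∈ I, ∀ γ₂ ∈ I, γ₁ + γ₂ ∉ R.roots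

/-- The set of minimal elements of `M ⊆ Δ⁺` w.r.t. `≼`. -/
def minSet (M : Set V) : Set V := {γ | γ ∈ M ∧ ∀ ν ∈ M, R.rle ν γ → ν = γ}

/-- The set of maximal elements of `M ⊆ Δ⁺` w.r.t. `≼`. -/
def maxSet (M : Set V) : Set V := {γ | γ ∈ M ∧ ∀ ν ∈ M, R.rle γ ν → ν = γ}

/-- `S(I) = {α ∈ Π : ∃ γ ∈ min(I), γ - α ∈ Δ⁺ ∪ {0}}`; the complement `Π ∖ S(I)` is the
set of simple roots of the standard Levi subalgebra of the normaliser of the ideal `I`. -/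
def normS (I : Set V) : Set V :=
  {α | α ∈ R.simples ∧ ∃ γ ∈ R.minSet I, (γ - α ∈ R.posRoots ∨ γ = α)}

/-- `H = {γ ∈ Δ⁺ : (γ, θ) ≠ 0}`. -/
def Hset (θ : V) : Set V := {γ | γ ∈ R.posRoots ∧ ⟪γ, θ⟫_ℝ ≠ 0}

/-- `deg_S(γ) = Σ_{α ∈ S} [γ:α]`. -/
def degS (S : Finset V) (γ : V) : ℤ := ∑ α ∈ S, R.coeff γ α

/-- `I_S = {γ ∈ Δ⁺ : deg_S(γ) ≥ ⌊d(S)/2⌋ + 1}`, where `d(S) = deg_S(θ)`: the abelian ideal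
`g(≥ ⌊hot(p)/2⌋ + 1)` associated with the standard parabolic subalgebra `p(S)`. -/
def idealS (S : Finset V) (θ : V) : Set V :=
  {γ | γ ∈ R.posRoots ∧ R.degS S θ / 2 + 1 ≤ R.degS S γ}

/-- The highest root `θ` is fundamental with `α_θ` the unique simple root not
orthogonal to `θ`, and `(θ, α_θ∨) = 1`. -/
def IsFundamental (θ αθ : V) : Prop :=
  αθ ∈ R.simples ∧ ⟪θ, αθ⟫_ℝ ≠ 0 ∧ (∀ β ∈ R.simples, ⟪θ, β⟫_ℝ ≠ 0 → β = αθ) ∧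
    2 * ⟪θ, αθ⟫_ℝ / ⟪αθ, αθ⟫_ℝ = 1

end RootSystemData

/-- The reflection `s_α`. -/
noncomputable def rsRefl {V : Type} [NormedAddCommGroup V] [InnerProductSpace ℝ V] (α x : V) : V :=
  x - (2 * ⟪x, α⟫_ℝ / ⟪α, α⟫_ℝ) • α

/-- The element of the Weyl group given by the word `l = [α₁, …, α_m]`,
namely `s_{α₁} ∘ ⋯ ∘ s_{α_m}`; its inverse is `wordMap l.reverse`. -/
noncomputable def wordMap {V : Type} [NormedAddCommGroup V] [InnerProductSpace ℝ V] (l : List V) : V → V :=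
  l.foldr (fun α f => rsRefl α ∘ f) id

/-! Write `a = (α_θ, α_θ)`. Since `θ` is orthogonal to every simple root but `α_θ`, and
`(θ, α_θ) = a / 2`, one has `(γ, θ) = [γ:α_θ] a / 2` for every root `γ`; so `θ` is dominant,
`(γ, θ) ≤ (θ, θ)` for all roots, and equality forces `γ = θ` (as `s_θ γ = γ - 2θ` is a root,
`θ ≼ γ`). This pins down `[θ:α_θ] = 2`, hence `(θ, θ) = a`, and, reflecting `β ∈ S₁` in the
root `θ - α_θ`, also `(β, α_θ∨) = -1`. Therefore `(γ, α_θ) = a ([γ:α_θ] - deg_{S₁}(γ) / 2)`,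
which gives `d(S₁) = 3`. For a positive root `[γ:α_θ] ∈ {0, 1, 2}`, the value `2` is attained
only by `θ`, and `[γ:α_θ] = 0`, `deg_{S₁}(γ) = 2` is impossible: then `γ + 2α_θ` would be `θ`
with `(θ, α_θ) = a`. Since `deg_{S₂} = [·:α_θ] + deg_{S₁}`, the two ideals coincide. -/

namespace RootSystemData

variable {V : Type} [NormedAddCommGroup V] [InnerProductSpace ℝ V] [FiniteDimensional ℝ V]
variable (R : RootSystemData V)

theorem roots_subset_span_simples : R.roots ⊆ Submodule.span ℝ (R.simples : Set V) := by
  intro γ hγ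
  rw [R.coeff_spec γ hγ]
  exact Submodule.sum_mem _ fun α hα =>
    Submodule.smul_of_tower_mem _ _ (Submodule.subset_span hα)

noncomputable def simpleBasis : Module.Basis R.simples ℝ V :=
  .mk R.simples_indep <| by
    rw [← R.spans, Subtype.range_coe_subtype]
    exact Submodule.span_le.mpr R.roots_subset_span_simples

theorem simpleBasis_apply (α : R.simples) : R.simpleBasis α = α :=
  Module.Basis.mk_apply _ _ _

theorem simpleBasis_repr_simple {α : V} (hα : α ∈ R.simples) :
    R.simpleBasis.repr α = Finsupp.single ⟨α, hα⟩ 1 := by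
  rw [← R.simpleBasis.repr_self ⟨α, hα⟩, simpleBasis_apply]

theorem simpleBasis_repr_sum (c : V → ℝ) {α : V} (hα : α ∈ R.simples) :
    R.simpleBasis.repr (∑ β ∈ R.simples, c β • β) ⟨α, hα⟩ = c α := by
  rw [← Finset.sum_coe_sort R.simples]
  simp_rw [← R.simpleBasis_apply]
  rw [Module.Basis.repr_sum_self, simpleBasis_apply]

theorem simpleBasis_repr_sum_natCast (c : V → ℕ) {α : V} (hα : α ∈ R.simples) :
    R.simpleBasis.repr (∑ β ∈ R.simples, (c β : ℤ) • β) ⟨α, hα⟩ = c α := by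
  simp_rw [← Int.cast_smul_eq_zsmul ℝ]
  exact_mod_cast R.simpleBasis_repr_sum (fun β => (c β : ℝ)) hα

theorem coeff_eq_simpleBasis_repr {γ α : V} (hγ : γ ∈ R.roots) (hα : α ∈ R.simples) :
    (R.coeff γ α : ℝ) = R.simpleBasis.repr γ ⟨α, hα⟩ := by
  conv_rhs => rw [R.coeff_spec γ hγ]
  simp_rw [← Int.cast_smul_eq_zsmul ℝ]
  rw [simpleBasis_repr_sum]

theorem rle_antisymm {μ ν : V} (h₁ : R.rle μ ν) (h₂ : R.rle ν μ) : μ = ν := by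
  obtain ⟨c₁, hc₁⟩ := h₁
  obtain ⟨c₂, hc₂⟩ := h₂
  have hc₁_zero : ∀ α ∈ R.simples, c₁ α = 0 := fun α hα => by
    have h := congrArg (fun x => R.simpleBasis.repr x ⟨α, hα⟩)
      (show (ν - μ) + (μ - ν) = 0 by abel)
    simp only [hc₁, hc₂, map_add, Finsupp.add_apply, simpleBasis_repr_sum_natCast, map_zero,
      Finsupp.coe_zero, Pi.zero_apply] at h
    norm_cast at h
    omega
  rw [← sub_eq_zero, ← neg_sub, hc₁, neg_eq_zero]
  exact Finset.sum_eq_zero fun α hα => by simp [hc₁_zero α hα]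

theorem inner_self_pos {γ : V} (hγ : γ ∈ R.roots) : 0 < ⟪γ, γ⟫_ℝ :=
  real_inner_self_pos.mpr (R.nonzero γ hγ)

theorem sub_smul_mem_roots {α β : V} (hα : α ∈ R.roots) (hβ : β ∈ R.roots) {t : ℝ}
    (h : 2 * ⟪β, α⟫_ℝ = t * ⟪α, α⟫_ℝ) : β - t • α ∈ R.roots := by
  have := R.reflClosed α hα β hβ
  rwa [h, mul_div_cancel_right₀ _ (R.inner_self_pos hα).ne'] at this

theorem neg_mem_roots {γ : V} (hγ : γ ∈ R.roots) : -γ ∈ R.roots := by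
  have := R.sub_smul_mem_roots hγ hγ (t := 2) rfl
  rwa [two_smul, sub_add_cancel_left] at this

theorem inner_eq_sum_coeff {γ : V} (hγ : γ ∈ R.roots) (x : V) :
    ⟪γ, x⟫_ℝ = ∑ α ∈ R.simples, (R.coeff γ α : ℝ) * ⟪α, x⟫_ℝ := by
  conv_lhs => rw [R.coeff_spec γ hγ]
  simp_rw [sum_inner, ← Int.cast_smul_eq_zsmul ℝ, real_inner_smul_left]

theorem inner_simples_nonpos {α β : V} (hα : α ∈ R.simples) (hβ : β ∈ R.simples)
    (hne : α ≠ β) : ⟪α, β⟫_ℝ ≤ 0 := by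
  by_contra! hpos
  have hβr := R.simples_sub hβ
  obtain ⟨k, hk⟩ := R.crystal β hβr α (R.simples_sub hα)
  have hk_pos : (0 : ℝ) < k := hk ▸ div_pos (by positivity) (R.inner_self_pos hβr)
  have hmem : α - (k : ℝ) • β ∈ R.roots := R.sub_smul_mem_roots hβr (R.simples_sub hα) <| by
    rw [← hk, div_mul_cancel₀ _ (R.inner_self_pos hβr).ne']
  have hα_coeff : (R.coeff (α - (k : ℝ) • β) α : ℝ) = 1 := by
    simp [R.coeff_eq_simpleBasis_repr hmem hα, R.simpleBasis_repr_simple hα,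
      R.simpleBasis_repr_simple hβ, hne]
  have hβ_coeff : (R.coeff (α - (k : ℝ) • β) β : ℝ) = -k := by
    simp [R.coeff_eq_simpleBasis_repr hmem hβ, R.simpleBasis_repr_simple hα,
      R.simpleBasis_repr_simple hβ, hne]
  rcases R.coeff_sign _ hmem with h | h
  · have := h β hβ
    have : (0 : ℝ) ≤ R.coeff (α - (k : ℝ) • β) β := by exact_mod_cast this
    linarith
  · have := h α hα
    have : (R.coeff (α - (k : ℝ) • β) α : ℝ) ≤ 0 := by exact_mod_cast this
    linarith

theorem inner_le_inner_of_rle {x μ ν : V} (hx : ∀ α ∈ R.simples, 0 ≤ ⟪α, x⟫_ℝ)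
    (h : R.rle μ ν) : ⟪μ, x⟫_ℝ ≤ ⟪ν, x⟫_ℝ := by
  obtain ⟨c, hc⟩ := h
  have : 0 ≤ ⟪ν - μ, x⟫_ℝ := by
    rw [hc, sum_inner]
    exact Finset.sum_nonneg fun α hα => by
      rw [natCast_zsmul, ← Nat.cast_smul_eq_nsmul ℝ, real_inner_smul_left]
      exact mul_nonneg (Nat.cast_nonneg _) (hx α hα)
  rw [inner_sub_left] at this
  linarith

def adjacentSimples (α : V) : Set V := {β | β ∈ R.simples ∧ β ≠ α ∧ ⟪β, α⟫_ℝ ≠ 0}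

variable {R}
variable {θ αθ : V}

theorem IsHighest.eq_of_inner_eq {δ : V} (hθ : R.IsHighest θ) (hδ : δ ∈ R.roots)
    (h : ⟪δ, θ⟫_ℝ = ⟪θ, θ⟫_ℝ) : δ = θ := by
  have hθr := hθ.1.1
  have hmem := R.neg_mem_roots (R.sub_smul_mem_roots hθr hδ (t := 2) (by rw [h]))
  obtain ⟨c, hc⟩ := hθ.2 _ hmem
  refine R.rle_antisymm (hθ.2 δ hδ) ⟨c, ?_⟩
  rw [← hc, two_smul]
  abel

theorem IsFundamental.inner_eq_half (hf : R.IsFundamental θ αθ) :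
    ⟪θ, αθ⟫_ℝ = ⟪αθ, αθ⟫_ℝ / 2 := by
  have h := hf.2.2.2
  have ha := R.inner_self_pos (R.simples_sub hf.1)
  field_simp at h
  linarith

theorem IsFundamental.inner_eq_half' (hf : R.IsFundamental θ αθ) :
    ⟪αθ, θ⟫_ℝ = ⟪αθ, αθ⟫_ℝ / 2 := by
  rw [real_inner_comm, hf.inner_eq_half]

theorem IsFundamental.inner_eq_zero (hf : R.IsFundamental θ αθ) {β : V}
    (hβ : β ∈ R.simples) (hne : β ≠ αθ) : ⟪β, θ⟫_ℝ = 0 := by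
  by_contra h
  exact hne (hf.2.2.1 β hβ (by rwa [real_inner_comm]))

theorem IsFundamental.inner_eq_coeff_mul (hf : R.IsFundamental θ αθ) {γ : V}
    (hγ : γ ∈ R.roots) : ⟪γ, θ⟫_ℝ = R.coeff γ αθ * (⟪αθ, αθ⟫_ℝ / 2) := by
  rw [R.inner_eq_sum_coeff hγ, Finset.sum_eq_single_of_mem αθ hf.1 fun β hβ hne => by
    rw [hf.inner_eq_zero hβ hne, mul_zero], hf.inner_eq_half']

theorem IsFundamental.inner_simples_nonneg (hf : R.IsFundamental θ αθ) :
    ∀ α ∈ R.simples, 0 ≤ ⟪α, θ⟫_ℝ := by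
  intro α hα
  by_cases hne : α = αθ
  · rw [hne, hf.inner_eq_half']
    exact div_nonneg real_inner_self_nonneg zero_le_two
  · exact (hf.inner_eq_zero hα hne).ge

theorem IsFundamental.inner_le_inner_self (hθ : R.IsHighest θ) (hf : R.IsFundamental θ αθ)
    {γ : V} (hγ : γ ∈ R.roots) : ⟪γ, θ⟫_ℝ ≤ ⟪θ, θ⟫_ℝ :=
  R.inner_le_inner_of_rle hf.inner_simples_nonneg (hθ.2 γ hγ)

theorem IsFundamental.coeff_highest_eq_two (hθ : R.IsHighest θ) (hf : R.IsFundamental θ αθ) :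
    R.coeff θ αθ = 2 := by
  have hαθ := R.simples_sub hf.1
  have ha := R.inner_self_pos hαθ
  have hθθ := hf.inner_eq_coeff_mul hθ.1.1
  have hαθθ := hf.inner_eq_half'
  have hne : αθ ≠ θ := by
    intro h
    have := hf.inner_eq_half
    rw [h] at this
    linarith [R.inner_self_pos hθ.1.1]
  have hc_ne_one : R.coeff θ αθ ≠ 1 := fun h =>
    hne (hθ.eq_of_inner_eq hαθ (by rw [hαθθ, hθθ, h]; ring))
  have hc_ge_one : 1 ≤ R.coeff θ αθ := by
    have := hf.inner_le_inner_self hθ hαθ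
    rw [hαθθ, hθθ] at this
    exact_mod_cast (le_mul_iff_one_le_left (half_pos ha)).mp this
  obtain ⟨k, hk⟩ := R.crystal θ hθ.1.1 αθ hαθ
  have hck : R.coeff θ αθ * k = 2 := by
    rw [hαθθ, hθθ] at hk
    field_simp at hk
    exact_mod_cast hk.symm
  have := Int.le_of_dvd two_pos ⟨k, hck.symm⟩
  omega

theorem IsFundamental.inner_highest_self (hθ : R.IsHighest θ) (hf : R.IsFundamental θ αθ) :
    ⟪θ, θ⟫_ℝ = ⟪αθ, αθ⟫_ℝ := by
  rw [hf.inner_eq_coeff_mul hθ.1.1, hf.coeff_highest_eq_two hθ]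
  push_cast
  ring

theorem IsFundamental.coeff_le_two (hθ : R.IsHighest θ) (hf : R.IsFundamental θ αθ)
    {γ : V} (hγ : γ ∈ R.roots) : R.coeff γ αθ ≤ 2 := by
  have h := hf.inner_le_inner_self hθ hγ
  rw [hf.inner_eq_coeff_mul hγ, hf.inner_highest_self hθ] at h
  have ha := R.inner_self_pos (R.simples_sub hf.1)
  have : (R.coeff γ αθ : ℝ) ≤ 2 := by nlinarith
  exact_mod_cast this

theorem IsFundamental.eq_of_coeff_eq_two (hθ : R.IsHighest θ) (hf : R.IsFundamental θ αθ)
    {γ : V} (hγ : γ ∈ R.roots) (h : R.coeff γ αθ = 2) : γ = θ :=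
  hθ.eq_of_inner_eq hγ <| by
    rw [hf.inner_eq_coeff_mul hγ, h, hf.inner_highest_self hθ]
    push_cast
    ring

theorem IsFundamental.inner_adjacent_eq (hθ : R.IsHighest θ) (hf : R.IsFundamental θ αθ)
    {β : V} (hβ : β ∈ R.simples) (hne : β ≠ αθ) (h0 : ⟪β, αθ⟫_ℝ ≠ 0) :
    ⟪β, αθ⟫_ℝ = -(⟪αθ, αθ⟫_ℝ / 2) := by
  have hθr := hθ.1.1
  have hαθ := R.simples_sub hf.1
  have hβr := R.simples_sub hβ
  have ha := R.inner_self_pos hαθ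
  have hθθ := hf.inner_highest_self hθ
  have hθαθ := hf.inner_eq_half
  have hαθθ := hf.inner_eq_half'
  have hβθ := hf.inner_eq_zero hβ hne
  obtain ⟨k, hk⟩ := R.crystal αθ hαθ β hβr
  have hβαθ : ⟪β, αθ⟫_ℝ = k * (⟪αθ, αθ⟫_ℝ / 2) := by
    field_simp at hk ⊢
    linarith
  have hk_neg : k < 0 := by
    have := lt_of_le_of_ne (R.inner_simples_nonpos hβ hf.1 hne) h0
    have : (k : ℝ) < 0 := by nlinarith
    exact_mod_cast this
  have hγ₀ : θ - αθ ∈ R.roots := by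
    simpa using R.sub_smul_mem_roots hαθ hθr (t := 1) (by rw [hθαθ]; ring)
  -- `ρ = -s_{θ-αθ} β` has `(ρ, θ) = -k (αθ, αθ) / 2 ≤ (θ, θ)` and `(ρ, αθ) = 0`,
  -- so `-k ≤ 2`, and `-k = 2` would force `ρ = θ`.
  have hρ := R.neg_mem_roots <| R.sub_smul_mem_roots hγ₀ hβr (t := -k) <| by
    simp only [inner_sub_left, inner_sub_right]
    rw [hβθ, hβαθ, hθθ, hθαθ, hαθθ]
    ring
  have hρ_inner : ∀ x,
      ⟪-(β - (-k : ℝ) • (θ - αθ)), x⟫_ℝ = -⟪β, x⟫_ℝ - k * (⟪θ, x⟫_ℝ - ⟪αθ, x⟫_ℝ) := by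
    intro x
    simp only [inner_neg_left, inner_sub_left, real_inner_smul_left]
    ring
  have hk_ge : -2 ≤ k := by
    have := hf.inner_le_inner_self hθ hρ
    rw [hρ_inner, hβθ, hθθ, hαθθ] at this
    have : (-2 : ℝ) ≤ k := by nlinarith
    exact_mod_cast this
  have hk_ne : k ≠ -2 := by
    rintro rfl
    have hρθ := hθ.eq_of_inner_eq hρ (by rw [hρ_inner, hβθ, hθθ, hαθθ]; push_cast; ring)
    have := hρ_inner αθ
    rw [hρθ, hβαθ, hθαθ] at this
    push_cast at this
    linarith
  rw [hβαθ, show k = -1 by omega]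
  push_cast
  ring

theorem degS_insert [DecidableEq V] {S : Finset V} {α : V} (hα : α ∉ S) (γ : V) :
    R.degS (insert α S) γ = R.coeff γ α + R.degS S γ :=
  Finset.sum_insert hα

theorem IsFundamental.inner_eq_coeff_sub_degS (hθ : R.IsHighest θ) (hf : R.IsFundamental θ αθ)
    {S : Finset V} (hS : (↑S : Set V) = R.adjacentSimples αθ)
    {γ : V} (hγ : γ ∈ R.roots) :
    ⟪γ, αθ⟫_ℝ = R.coeff γ αθ * ⟪αθ, αθ⟫_ℝ - ⟪αθ, αθ⟫_ℝ / 2 * R.degS S γ := by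
  classical
  have hmem : ∀ β, β ∈ S ↔ β ∈ R.simples ∧ β ≠ αθ ∧ ⟪β, αθ⟫_ℝ ≠ 0 :=
    fun β => Set.ext_iff.mp hS β
  have hαθS : αθ ∉ S := fun h => ((hmem αθ).mp h).2.1 rfl
  have hsub : insert αθ S ⊆ R.simples :=
    Finset.insert_subset hf.1 fun β hβ => ((hmem β).mp hβ).1
  rw [R.inner_eq_sum_coeff hγ, ← Finset.sum_subset hsub fun β hβ hβS => ?_,
    Finset.sum_insert hαθS, degS, Int.cast_sum, Finset.mul_sum, sub_eq_add_neg,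
    ← Finset.sum_neg_distrib]
  · congr 1
    refine Finset.sum_congr rfl fun β hβ => ?_
    obtain ⟨hβ, hne, h0⟩ := (hmem β).mp hβ
    rw [hf.inner_adjacent_eq hθ hβ hne h0]
    ring
  · have hne : β ≠ αθ := fun h => hβS (h ▸ Finset.mem_insert_self αθ S)
    have h0 : ⟪β, αθ⟫_ℝ = 0 := by
      by_contra h0
      exact hβS (Finset.mem_insert_of_mem ((hmem β).mpr ⟨hβ, hne, h0⟩))
    rw [h0, mul_zero]

theorem IsFundamental.degS_adjacent_highest (hθ : R.IsHighest θ) (hf : R.IsFundamental θ αθ)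
    {S : Finset V} (hS : (↑S : Set V) = R.adjacentSimples αθ) :
    R.degS S θ = 3 := by
  have h := hf.inner_eq_coeff_sub_degS hθ hS hθ.1.1
  rw [hf.inner_eq_half, hf.coeff_highest_eq_two hθ] at h
  have ha := R.inner_self_pos (R.simples_sub hf.1)
  have : (R.degS S θ : ℝ) = 3 := by
    push_cast at h
    nlinarith
  exact_mod_cast this

theorem IsFundamental.degS_adjacent_ne_two (hθ : R.IsHighest θ) (hf : R.IsFundamental θ αθ)
    {S : Finset V} (hS : (↑S : Set V) = R.adjacentSimples αθ)
    {γ : V} (hγ : γ ∈ R.roots) (h0 : R.coeff γ αθ = 0) : R.degS S γ ≠ 2 := by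
  intro h2
  have hαθ := R.simples_sub hf.1
  have hγαθ := hf.inner_eq_coeff_sub_degS hθ hS hγ
  rw [h0, h2] at hγαθ
  have hγθ := hf.inner_eq_coeff_mul hγ
  rw [h0] at hγθ
  have hαθθ := hf.inner_eq_half'
  have hδ := R.sub_smul_mem_roots hαθ hγ (t := -2) (by rw [hγαθ]; push_cast; ring)
  have hδθ : γ - (-2 : ℝ) • αθ = θ := hθ.eq_of_inner_eq hδ <| by
    rw [inner_sub_left, real_inner_smul_left, hγθ, hαθθ, hf.inner_highest_self hθ]
    push_cast
    ring
  have := hf.inner_eq_half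
  rw [← hδθ, inner_sub_left, real_inner_smul_left, hγαθ] at this
  push_cast at this
  linarith [R.inner_self_pos hαθ]

end RootSystemData

/-- Theorem 4.4(ii): if `θ` is fundamental, `S₁` is the set of simple
roots adjacent to `α_θ` and `S₂ = S₁ ∪ {α_θ}`, then `S₁ ≠ S₂`, `d(S₁) = 3`, `d(S₂) = 5`,
and `I_{S₁} = I_{S₂}`, i.e.
`{γ ∈ Δ⁺ : deg_{S₁}(γ) ≥ 2} = {γ ∈ Δ⁺ : deg_{S₂}(γ) ≥ 3}`; in particular `S ↦ I_S`
is not injective. -/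
theorem stmt16 {V : Type} [NormedAddCommGroup V] [InnerProductSpace ℝ V] [FiniteDimensional ℝ V]
    (R : RootSystemData V) (θ αθ : V) (hθ : R.IsHighest θ)
    (hfund : R.IsFundamental θ αθ)
    (S₁ : Finset V)
    (hS₁ : (↑S₁ : Set V) = {β : V | β ∈ R.simples ∧ β ≠ αθ ∧ ⟪β, αθ⟫_ℝ ≠ 0})
    (S₂ : Finset V) (hS₂ : (↑S₂ : Set V) = insert αθ ↑S₁) :
    S₁ ≠ S₂ ∧ R.degS S₁ θ = 3 ∧ R.degS S₂ θ = 5 ∧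
      {γ : V | γ ∈ R.posRoots ∧ 2 ≤ R.degS S₁ γ}
        = {γ : V | γ ∈ R.posRoots ∧ 3 ≤ R.degS S₂ γ} := by
  classical
  have hαθS₁ : αθ ∉ S₁ := fun h => (hS₁.subset (Finset.mem_coe.mpr h)).2.1 rfl
  obtain rfl : S₂ = insert αθ S₁ := by rw [← Finset.coe_inj, hS₂, Finset.coe_insert]
  have hdeg := hfund.degS_adjacent_highest hθ hS₁
  refine ⟨fun h => hαθS₁ (h ▸ Finset.mem_insert_self αθ S₁), hdeg, ?_, ?_⟩
  · rw [R.degS_insert hαθS₁, hfund.coeff_highest_eq_two hθ, hdeg]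
    rfl
  refine Set.ext fun γ => and_congr_right fun hγ => ?_
  rw [R.degS_insert hαθS₁]
  have hnonneg := hγ.2 αθ hfund.1
  have hle := hfund.coeff_le_two hθ hγ.1
  have hne := hfund.degS_adjacent_ne_two hθ hS₁ hγ.1
  have htop : R.coeff γ αθ = 2 → R.degS S₁ γ = 3 := fun h =>
    hfund.eq_of_coeff_eq_two hθ hγ.1 h ▸ hdeg
  omega
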